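/- Suppose 1 ∈ U and U contains elements u, v, w such that 1, u, v, w are pairwise non-±-equal. Then R(U) is dense in ℂ: for every x ∈ ℂ and every ε > 0 there exists z ∈ R(U) with |z − x| < ε. -/

import Mathlib

open Complex

/-- The bracket `[x,y] = x * conj y - y * conj x`. -/
noncomputable def brkt (x y : ℂ) : ℂ := x * (starRingEnd ℂ) y - y * (starRingEnd ℂ) x

/-- `lineInt α β p q` is the intersection point `I_{α,β}(p,q)` of the line through `p`
with direction `α` and the line through `q` with direction `β` (for unit `α ≠ ±β`),
given by the formula of Buhler et al. -/
noncomputable def lineInt (α β p q : ℂ) : ℂ :=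
  brkt α p / brkt α β * β + brkt β q / brkt β α * α

/-- The sets `S n` in the inductive construction. -/
def stepSet (U : Set ℂ) : ℕ → Set ℂ
  | 0 => {0, 1}
  | n + 1 => {z | ∃ α ∈ U, ∃ β ∈ U, α ≠ β ∧ α ≠ -β ∧
      ∃ p ∈ stepSet U n, ∃ q ∈ stepSet U n, z = lineInt α β p q}

/-- `RU U = ⋃ n, S n`. -/
def RU (U : Set ℂ) : Set ℂ := ⋃ n, stepSet U n

/-- Elementary monomials of `U`. -/
def IsElem (U : Set ℂ) (z : ℂ) : Prop :=
  ∃ α ∈ U, ∃ β ∈ U, α ≠ β ∧ α ≠ -β ∧ z = lineInt α β 0 1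

/-- Monomials of `U`, defined inductively. -/
inductive IsMonomial (U : Set ℂ) : ℂ → Prop
  | elementary (α β : ℂ) (hα : α ∈ U) (hβ : β ∈ U) (h1 : α ≠ β) (h2 : α ≠ -β) :
      IsMonomial U (lineInt α β 0 1)
  | step (α β m : ℂ) (hα : α ∈ U) (hβ : β ∈ U) (h1 : α ≠ β) (h2 : α ≠ -β)
      (hm : IsMonomial U m) : IsMonomial U (lineInt α β 0 m)

/-- `P`: the real numbers arising as length-two monomials `I_{γ,δ}(0,z)` on the real axis. -/
def projSet (U : Set ℂ) : Set ℝ :=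
  {r | ∃ γ ∈ U, ∃ δ ∈ U, γ ≠ δ ∧ γ ≠ -δ ∧ ∃ z, IsElem U z ∧ (r : ℂ) = lineInt γ δ 0 z}

/-- `m` is a `ℤ[P]`-linear combination of elementary monomials of `U`. -/
def IsZPComb (U : Set ℂ) (m : ℂ) : Prop :=
  ∃ (n : ℕ) (c : Fin n → ℝ) (z : Fin n → ℂ),
    (∀ i, c i ∈ Subring.closure (projSet U)) ∧ (∀ i, IsElem U (z i)) ∧
    m = ∑ i, (c i : ℂ) * z i

/-!
`brkt x y` is `2i` times the determinant of `x, y ∈ ℝ²`, so `brkt a z = brkt a p` says that `z`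
lies on the line through `p` in direction `a`; transversal directions have `brkt a b ≠ 0`.

With three pairwise transversal directions, completing parallelograms shows that `R(U)` is closed
under addition and negation. Following the line of direction `d` to the real axis after that of
direction `b` to the line `ℝa` multiplies every real point `k` of `R(U)` by the real number
`τ(a,b,d) = I_{1,d}(0, I_{a,b}(0,1))`. The numbers `τ(u,v,w)`, `τ(u,w,v)`, `τ(v,w,u)` are not all
integers: the first two are reciprocal, the first is not `1`, and it is `-1` only if the third is
`1/2`. So the ring they generate is dense in `ℝ`, hence so are the real points of `R(U)`, and
`R(U)` contains `s + t μ` for all such points `s, t` and the non-real `μ = I_{u,v}(0,1)`.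
-/

open ComplexConjugate

section Bracket

variable (x y z t : ℂ)

@[simp] lemma brkt_self : brkt x x = 0 := by simp only [brkt]; ring

lemma brkt_swap : brkt y x = -brkt x y := by simp only [brkt]; ring

@[simp] lemma brkt_zero_right : brkt x 0 = 0 := by simp [brkt]

@[simp] lemma brkt_add_right : brkt x (y + z) = brkt x y + brkt x z := by
  simp only [brkt, map_add]; ring

@[simp] lemma brkt_sub_right : brkt x (y - z) = brkt x y - brkt x z := by
  simp only [brkt, map_sub]; ring

@[simp] lemma brkt_neg_right : brkt x (-y) = -brkt x y := by
  simp only [brkt, map_neg]; ring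

@[simp] lemma brkt_neg_left : brkt (-x) y = -brkt x y := by
  simp only [brkt, map_neg]; ring

lemma brkt_mul_right_of_conj_eq {c : ℂ} (hc : conj c = c) : brkt x (c * y) = c * brkt x y := by
  simp only [brkt, map_mul, hc]; ring

lemma conj_brkt : conj (brkt x y) = -brkt x y := by
  simp only [brkt, map_sub, map_mul, conj_conj]; ring

lemma conj_brkt_div_brkt : conj (brkt x y / brkt z t) = brkt x y / brkt z t := by
  rw [map_div₀, conj_brkt, conj_brkt, neg_div_neg_eq]

variable {x y}

lemma brkt_ne_zero_swap (h : brkt x y ≠ 0) : brkt y x ≠ 0 := by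
  rwa [brkt_swap, neg_ne_zero]

lemma ne_of_brkt_ne_zero (h : brkt x y ≠ 0) : x ≠ y := by
  rintro rfl; exact h (brkt_self x)

lemma ne_neg_of_brkt_ne_zero (h : brkt x y ≠ 0) : x ≠ -y := by
  rintro rfl; exact h (by rw [brkt_neg_left, brkt_self, neg_zero])

lemma brkt_ne_zero (hx : ‖x‖ = 1) (hy : ‖y‖ = 1) (h₁ : x ≠ y) (h₂ : x ≠ -y) : brkt x y ≠ 0 := by
  have hunit : ∀ {z : ℂ}, ‖z‖ = 1 → z * conj z = 1 := fun hz => by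
    rw [mul_conj, normSq_eq_norm_sq, hz]; norm_num
  intro h
  rw [brkt] at h
  -- `x * conj y` is then real and of modulus one, hence `±1`.
  have hsq : (x * conj y) ^ 2 = 1 := by
    linear_combination x * conj y * h + y * conj y * hunit hx + hunit hy
  rcases sq_eq_one_iff.mp hsq with h' | h'
  · exact h₁ (by linear_combination y * h' - x * hunit hy)
  · exact h₂ (by linear_combination y * h' - x * hunit hy)

end Bracket

section LineIntersection

variable {a b c p q z : ℂ}

lemma brkt_lineInt_left (h : brkt a b ≠ 0) (p q : ℂ) : brkt a (lineInt a b p q) = brkt a p := by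
  rw [lineInt, brkt_add_right, brkt_mul_right_of_conj_eq _ _ (conj_brkt_div_brkt _ _ _ _),
    brkt_mul_right_of_conj_eq _ _ (conj_brkt_div_brkt _ _ _ _), brkt_self, mul_zero, add_zero,
    div_mul_cancel₀ _ h]

lemma brkt_lineInt_right (h : brkt a b ≠ 0) (p q : ℂ) : brkt b (lineInt a b p q) = brkt b q := by
  rw [lineInt, brkt_add_right, brkt_mul_right_of_conj_eq _ _ (conj_brkt_div_brkt _ _ _ _),
    brkt_mul_right_of_conj_eq _ _ (conj_brkt_div_brkt _ _ _ _), brkt_self, mul_zero, zero_add,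
    div_mul_cancel₀ _ (brkt_ne_zero_swap h)]

lemma lineInt_eq_of_brkt_eq (h : brkt a b ≠ 0) (hp : brkt a z = brkt a p)
    (hq : brkt b z = brkt b q) : lineInt a b p q = z := by
  have hdecomp : brkt a z * b - brkt b z * a = z * brkt a b := by simp only [brkt]; ring
  rw [lineInt, ← hp, ← hq, brkt_swap a b, div_neg]
  field_simp
  linear_combination hdecomp

lemma lineInt_self (h : brkt a b ≠ 0) (z : ℂ) : lineInt a b z z = z :=
  lineInt_eq_of_brkt_eq h rfl rfl

lemma lineInt_zero_left (a b q : ℂ) : lineInt a b 0 q = brkt b q / brkt b a * a := by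
  simp [lineInt]

lemma lineInt_zero_ofReal_mul (a b : ℂ) (k : ℝ) (z : ℂ) :
    lineInt a b 0 (k * z) = k * lineInt a b 0 z := by
  rw [lineInt_zero_left, lineInt_zero_left, brkt_mul_right_of_conj_eq _ _ (conj_ofReal k)]
  ring

/-- `X + Y - p` completes the parallelogram on `X, p, Y`. -/
lemma lineInt_eq_add_sub (h : brkt c b ≠ 0) {X Y : ℂ} (hX : brkt b X = brkt b p)
    (hY : brkt c Y = brkt c p) : lineInt c b X Y = X + Y - p :=
  lineInt_eq_of_brkt_eq h (by simp [hY]) (by simp [hX])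

lemma lineInt_eq_add (hab : brkt a b ≠ 0) (hac : brkt a c ≠ 0) (hbc : brkt b c ≠ 0) (p q : ℂ) :
    lineInt a b (lineInt c b (lineInt a b p 0) (lineInt a c q 0))
      (lineInt c a (lineInt b a p 0) (lineInt b c q 0)) = p + q := by
  have hba := brkt_ne_zero_swap hab
  rw [lineInt_eq_add_sub (p := 0) (brkt_ne_zero_swap hbc) (brkt_lineInt_right hab p 0)
      (brkt_lineInt_right hac q 0),
    lineInt_eq_add_sub (p := 0) (brkt_ne_zero_swap hac) (brkt_lineInt_right hba p 0)
      (brkt_lineInt_right hbc q 0)]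
  refine lineInt_eq_of_brkt_eq hab ?_ ?_
  · simp [brkt_lineInt_left hab, brkt_lineInt_left hac]
  · simp [brkt_lineInt_left hba, brkt_lineInt_left hbc]

lemma lineInt_eq_neg (hab : brkt a b ≠ 0) (hac : brkt a c ≠ 0) (hbc : brkt b c ≠ 0) (p : ℂ) :
    lineInt a b (lineInt c b (lineInt b a p 0) (lineInt c a p 0))
      (lineInt c a (lineInt a b p 0) (lineInt c b p 0)) = -p := by
  have hba := brkt_ne_zero_swap hab
  have hca := brkt_ne_zero_swap hac
  have hcb := brkt_ne_zero_swap hbc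
  rw [lineInt_eq_add_sub hcb (brkt_lineInt_left hba p 0) (brkt_lineInt_left hca p 0),
    lineInt_eq_add_sub hca (brkt_lineInt_left hab p 0) (brkt_lineInt_left hcb p 0)]
  refine lineInt_eq_of_brkt_eq hab ?_ ?_
  · simp [brkt_lineInt_right hba, brkt_lineInt_right hca]
  · simp [brkt_lineInt_right hab, brkt_lineInt_right hcb]

lemma im_lineInt_zero_one_ne_zero (ha1 : brkt a 1 ≠ 0) (hb1 : brkt b 1 ≠ 0)
    (hab : brkt a b ≠ 0) : (lineInt a b 0 1).im ≠ 0 := by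
  intro h
  have hreal := conj_eq_iff_im.mpr h
  rw [lineInt_zero_left, map_mul, conj_brkt_div_brkt] at hreal
  have ha := mul_left_cancel₀ (div_ne_zero hb1 (brkt_ne_zero_swap hab)) hreal
  exact ha1 (by simp [brkt, ha])

end LineIntersection

section ScaleFactor

variable {a b d : ℂ}

noncomputable def scaleFactor (a b d : ℂ) : ℝ := (lineInt 1 d 0 (lineInt a b 0 1)).re

lemma lineInt_one_zero_lineInt_zero_one (a b d : ℂ) :
    lineInt 1 d 0 (lineInt a b 0 1) = brkt b 1 / brkt b a * (brkt d a / brkt d 1) := by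
  rw [lineInt_zero_left, lineInt_zero_left,
    brkt_mul_right_of_conj_eq _ _ (conj_brkt_div_brkt _ _ _ _), mul_one, mul_div_assoc]

lemma ofReal_scaleFactor (a b d : ℂ) :
    (scaleFactor a b d : ℂ) = brkt b 1 / brkt b a * (brkt d a / brkt d 1) := by
  rw [scaleFactor, lineInt_one_zero_lineInt_zero_one, ← conj_eq_iff_re, map_mul,
    conj_brkt_div_brkt, conj_brkt_div_brkt]

lemma lineInt_one_zero_lineInt_zero_ofReal (a b d : ℂ) (k : ℝ) :
    lineInt 1 d 0 (lineInt a b 0 k) = (scaleFactor a b d * k : ℝ) := by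
  rw [← mul_one (k : ℂ), lineInt_zero_ofReal_mul, lineInt_zero_ofReal_mul,
    lineInt_one_zero_lineInt_zero_one, ofReal_mul, ofReal_scaleFactor, mul_comm]

lemma scaleFactor_mul_scaleFactor (hb1 : brkt b 1 ≠ 0) (hd1 : brkt d 1 ≠ 0) (hab : brkt a b ≠ 0)
    (had : brkt a d ≠ 0) : scaleFactor a b d * scaleFactor a d b = 1 := by
  have hba := brkt_ne_zero_swap hab
  have hda := brkt_ne_zero_swap had
  apply ofReal_injective
  push_cast
  rw [ofReal_scaleFactor, ofReal_scaleFactor]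
  field_simp

lemma scaleFactor_ne_one (ha1 : brkt a 1 ≠ 0) (hd1 : brkt d 1 ≠ 0) (hab : brkt a b ≠ 0)
    (hbd : brkt b d ≠ 0) : scaleFactor a b d ≠ 1 := by
  have hba := brkt_ne_zero_swap hab
  intro h
  have h' := congrArg ((↑) : ℝ → ℂ) h
  rw [ofReal_scaleFactor, ofReal_one] at h'
  field_simp at h'
  refine mul_ne_zero hbd (brkt_ne_zero_swap ha1) ?_
  simp only [brkt] at h' ⊢
  linear_combination h'

lemma scaleFactor_eq_half (ha1 : brkt a 1 ≠ 0) (hd1 : brkt d 1 ≠ 0) (hab : brkt a b ≠ 0)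
    (hbd : brkt b d ≠ 0) (h : scaleFactor a b d = -1) : scaleFactor b d a = 1 / 2 := by
  have hba := brkt_ne_zero_swap hab
  have hdb := brkt_ne_zero_swap hbd
  have h' := congrArg ((↑) : ℝ → ℂ) h
  rw [ofReal_scaleFactor, ofReal_neg, ofReal_one] at h'
  field_simp at h'
  apply ofReal_injective
  rw [ofReal_scaleFactor]
  push_cast
  field_simp
  simp only [brkt] at h' ⊢
  linear_combination -h'

end ScaleFactor

lemma not_subset_range_intCast {x y z : ℝ} (hxy : x * y = 1) (hx : x ≠ 1)
    (hz : x = -1 → z = 1 / 2) : ¬{x, y, z} ⊆ Set.range ((↑) : ℤ → ℝ) := by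
  intro h
  obtain ⟨m, rfl⟩ : x ∈ Set.range _ := h (by simp)
  obtain ⟨n, rfl⟩ : y ∈ Set.range _ := h (by simp)
  obtain ⟨k, rfl⟩ : z ∈ Set.range _ := h (by simp)
  have hmn : m * n = 1 := by exact_mod_cast hxy
  rcases Int.eq_one_or_neg_one_of_mul_eq_one hmn with rfl | rfl
  · exact hx (by norm_num)
  · have hk : ((2 * k : ℤ) : ℝ) = 1 := by push_cast; linarith [hz (by norm_num)]
    have : 2 * k = 1 := by exact_mod_cast hk
    omega

lemma Subring.dense_of_not_subset_range_intCast (D : Subring ℝ)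
    (hD : ¬(D : Set ℝ) ⊆ Set.range ((↑) : ℤ → ℝ)) : Dense (D : Set ℝ) := by
  obtain ⟨ρ, hρ, hρℤ⟩ := Set.not_subset.mp hD
  have hfract : Int.fract ρ ∈ D := sub_mem hρ (intCast_mem D _)
  have hfract_pos : 0 < Int.fract ρ := Int.fract_pos.mpr fun h => hρℤ ⟨_, h.symm⟩
  refine D.toAddSubgroup.dense_of_not_isolated_zero fun ε hε => ?_
  obtain ⟨n, hn⟩ := exists_pow_lt_of_lt_one hε (Int.fract_lt_one ρ)
  exact ⟨_, pow_mem hfract n, pow_pos hfract_pos n, hn⟩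

lemma AddSubgroup.mul_mem_of_mem_subringClosure {R : Type*} [Ring R] {S : Set R}
    (K : AddSubgroup R) (hS : ∀ s ∈ S, ∀ k ∈ K, s * k ∈ K) {r : R} (hr : r ∈ Subring.closure S)
    {k : R} (hk : k ∈ K) : r * k ∈ K := by
  induction hr using Subring.closure_induction generalizing k with
  | mem s hs => exact hS s hs k hk
  | zero => simp
  | one => simpa using hk
  | add x y _ _ hx hy => rw [add_mul]; exact K.add_mem (hx hk) (hy hk)
  | neg x _ hx => rw [neg_mul]; exact K.neg_mem (hx hk)
  | mul x y _ _ hx hy => rw [mul_assoc]; exact hx (hy hk)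

lemma dense_image_add_mul {K : Set ℝ} (hK : Dense K) {μ : ℂ} (hμ : μ.im ≠ 0) :
    Dense ((fun st : ℝ × ℝ => (st.1 + st.2 * μ : ℂ)) '' K ×ˢ K) := by
  refine DenseRange.dense_image (Function.Surjective.denseRange fun x => ?_) (by fun_prop)
    (hK.prod hK)
  refine ⟨(x.re - x.im / μ.im * μ.re, x.im / μ.im), Complex.ext ?_ ?_⟩
  · simp
  · simp [hμ]

section Constructible

variable {U : Set ℂ} {a b c d α β p q : ℂ}

lemma zero_mem_RU : (0 : ℂ) ∈ RU U := Set.mem_iUnion.mpr ⟨0, Or.inl rfl⟩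

lemma one_mem_RU : (1 : ℂ) ∈ RU U := Set.mem_iUnion.mpr ⟨0, Or.inr rfl⟩

lemma monotone_stepSet (hα : α ∈ U) (hβ : β ∈ U) (h : brkt α β ≠ 0) : Monotone (stepSet U) :=
  monotone_nat_of_le_succ fun _ z hz => ⟨α, hα, β, hβ, ne_of_brkt_ne_zero h,
    ne_neg_of_brkt_ne_zero h, z, hz, z, hz, (lineInt_self h z).symm⟩

lemma lineInt_mem_RU (hα : α ∈ U) (hβ : β ∈ U) (h : brkt α β ≠ 0) (hp : p ∈ RU U)
    (hq : q ∈ RU U) : lineInt α β p q ∈ RU U := by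
  obtain ⟨m, hm⟩ := Set.mem_iUnion.mp hp
  obtain ⟨n, hn⟩ := Set.mem_iUnion.mp hq
  have hmono := monotone_stepSet hα hβ h
  exact Set.mem_iUnion.mpr ⟨max m n + 1, α, hα, β, hβ, ne_of_brkt_ne_zero h,
    ne_neg_of_brkt_ne_zero h, p, hmono (le_max_left m n) hm, q, hmono (le_max_right m n) hn, rfl⟩

lemma add_mem_RU (ha : a ∈ U) (hb : b ∈ U) (hc : c ∈ U) (hab : brkt a b ≠ 0)
    (hac : brkt a c ≠ 0) (hbc : brkt b c ≠ 0) (hp : p ∈ RU U) (hq : q ∈ RU U) :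
    p + q ∈ RU U := by
  rw [← lineInt_eq_add hab hac hbc]
  have hba := brkt_ne_zero_swap hab
  exact lineInt_mem_RU ha hb hab
    (lineInt_mem_RU hc hb (brkt_ne_zero_swap hbc) (lineInt_mem_RU ha hb hab hp zero_mem_RU)
      (lineInt_mem_RU ha hc hac hq zero_mem_RU))
    (lineInt_mem_RU hc ha (brkt_ne_zero_swap hac) (lineInt_mem_RU hb ha hba hp zero_mem_RU)
      (lineInt_mem_RU hb hc hbc hq zero_mem_RU))

lemma neg_mem_RU (ha : a ∈ U) (hb : b ∈ U) (hc : c ∈ U) (hab : brkt a b ≠ 0)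
    (hac : brkt a c ≠ 0) (hbc : brkt b c ≠ 0) (hp : p ∈ RU U) : -p ∈ RU U := by
  rw [← lineInt_eq_neg hab hac hbc]
  have hba := brkt_ne_zero_swap hab
  have hca := brkt_ne_zero_swap hac
  have hcb := brkt_ne_zero_swap hbc
  exact lineInt_mem_RU ha hb hab
    (lineInt_mem_RU hc hb hcb (lineInt_mem_RU hb ha hba hp zero_mem_RU)
      (lineInt_mem_RU hc ha hca hp zero_mem_RU))
    (lineInt_mem_RU hc ha hca (lineInt_mem_RU ha hb hab hp zero_mem_RU)
      (lineInt_mem_RU hc hb hcb hp zero_mem_RU))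

lemma ofReal_mul_scaleFactor_mem_RU (h1 : (1 : ℂ) ∈ U) (ha : a ∈ U) (hb : b ∈ U) (hd : d ∈ U)
    (hab : brkt a b ≠ 0) (hd1 : brkt d 1 ≠ 0) {k : ℝ} (hk : (k : ℂ) ∈ RU U) :
    ((scaleFactor a b d * k : ℝ) : ℂ) ∈ RU U := by
  rw [← lineInt_one_zero_lineInt_zero_ofReal]
  exact lineInt_mem_RU h1 hd (brkt_ne_zero_swap hd1) zero_mem_RU
    (lineInt_mem_RU ha hb hab zero_mem_RU hk)

variable {u v w : ℂ}

lemma dense_setOf_ofReal_mem_RU (h1 : (1 : ℂ) ∈ U) (hu : u ∈ U) (hv : v ∈ U) (hw : w ∈ U)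
    (hu1 : brkt u 1 ≠ 0) (hv1 : brkt v 1 ≠ 0) (hw1 : brkt w 1 ≠ 0) (huv : brkt u v ≠ 0)
    (huw : brkt u w ≠ 0) (hvw : brkt v w ≠ 0) : Dense {k : ℝ | (k : ℂ) ∈ RU U} := by
  let K : AddSubgroup ℝ :=
    { carrier := {k : ℝ | (k : ℂ) ∈ RU U}
      add_mem' := fun hx hy => by simpa using add_mem_RU hu hv h1 huv hu1 hv1 hx hy
      zero_mem' := by simpa using zero_mem_RU
      neg_mem' := fun hx => by simpa using neg_mem_RU hu hv h1 huv hu1 hv1 hx }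
  let S : Set ℝ := {scaleFactor u v w, scaleFactor u w v, scaleFactor v w u}
  have hS : ∀ s ∈ S, ∀ k ∈ K, s * k ∈ K := by
    rintro s (rfl | rfl | rfl) k hk
    · exact ofReal_mul_scaleFactor_mem_RU h1 hu hv hw huv hw1 hk
    · exact ofReal_mul_scaleFactor_mem_RU h1 hu hw hv huw hv1 hk
    · exact ofReal_mul_scaleFactor_mem_RU h1 hv hw hu hvw hu1 hk
  have hSK : (Subring.closure S : Set ℝ) ⊆ K := fun r hr => by
    simpa using K.mul_mem_of_mem_subringClosure hS hr (k := 1)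
      (show ((1 : ℝ) : ℂ) ∈ RU U by simpa using one_mem_RU)
  have hSℤ : ¬S ⊆ Set.range ((↑) : ℤ → ℝ) :=
    not_subset_range_intCast (scaleFactor_mul_scaleFactor hv1 hw1 huv huw)
      (scaleFactor_ne_one hu1 hw1 huv hvw) (scaleFactor_eq_half hu1 hw1 huv hvw)
  exact (Subring.dense_of_not_subset_range_intCast _
    fun h => hSℤ (Subring.subset_closure.trans h)).mono hSK

lemma dense_RU (h1 : (1 : ℂ) ∈ U) (hu : u ∈ U) (hv : v ∈ U) (hw : w ∈ U)
    (hu1 : brkt u 1 ≠ 0) (hv1 : brkt v 1 ≠ 0) (hw1 : brkt w 1 ≠ 0) (huv : brkt u v ≠ 0)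
    (huw : brkt u w ≠ 0) (hvw : brkt v w ≠ 0) : Dense (RU U) := by
  refine (dense_image_add_mul (dense_setOf_ofReal_mem_RU h1 hu hv hw hu1 hv1 hw1 huv huw hvw)
    (im_lineInt_zero_one_ne_zero hu1 hv1 huv)).mono ?_
  rintro _ ⟨⟨s, t⟩, ⟨hs, ht⟩, rfl⟩
  refine add_mem_RU hu hv h1 huv hu1 hv1 hs ?_
  rw [← lineInt_zero_ofReal_mul, mul_one]
  exact lineInt_mem_RU hu hv huv zero_mem_RU ht

end Constructible

/-- if `1 ∈ U` and `U` contains `u, v, w` with `1, u, v, w` pairwise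
non-±-equal, then `R(U)` is dense in `ℂ`. -/
theorem stmt14 (U : Set ℂ) (hU : ∀ z ∈ U, ‖z‖ = 1) (h1U : (1 : ℂ) ∈ U)
    (u v w : ℂ) (hu : u ∈ U) (hv : v ∈ U) (hw : w ∈ U)
    (hu1 : u ≠ 1) (hu1' : u ≠ -1) (hv1 : v ≠ 1) (hv1' : v ≠ -1)
    (hw1 : w ≠ 1) (hw1' : w ≠ -1)
    (huv : u ≠ v) (huv' : u ≠ -v) (huw : u ≠ w) (huw' : u ≠ -w)
    (hvw : v ≠ w) (hvw' : v ≠ -w) :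
    ∀ x : ℂ, ∀ ε : ℝ, 0 < ε → ∃ z ∈ RU U, ‖z - x‖ < ε := by
  have hbrkt : ∀ {a b : ℂ}, a ∈ U → b ∈ U → a ≠ b → a ≠ -b → brkt a b ≠ 0 :=
    fun ha hb => brkt_ne_zero (hU _ ha) (hU _ hb)
  have hdense := dense_RU h1U hu hv hw (hbrkt hu h1U hu1 hu1') (hbrkt hv h1U hv1 hv1')
    (hbrkt hw h1U hw1 hw1') (hbrkt hu hv huv huv') (hbrkt hu hw huw huw') (hbrkt hv hw hvw hvw')
  intro x ε hε
  obtain ⟨z, hzx, hz⟩ := Metric.dense_iff.mp hdense x ε hε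
  exact ⟨z, hz, by rwa [Metric.mem_ball, dist_eq_norm] at hzx⟩
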